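/- Fix a Clifford system, σ ∈ su(2) with ⟨σ, σ⟩ = 1, and R > 0. Let ad σ denote the map v ↦ σv − vσ on sl(2,ℂ), and for t ∈ ℝ let A_t = (1/√2) R (ρ₃ ⊗ ad σ) − (t/2)(Γ ⊗ id) acting on ℂ⁸ ⊗ sl(2,ℂ). Then for t > 0 the operator A_t has nontrivial kernel if and only if t = 2√2 R; and when t = 2√2 R, every element of the kernel can be written as ψ₊ + ψ₋ where (Γ ⊗ id) ψ₊ = ψ₊ and (ρ₃ ⊗ ad σ) ψ₊ = 2 ψ₊, while (Γ ⊗ id) ψ₋ = −ψ₋ and (ρ₃ ⊗ ad σ) ψ₋ = −2 ψ₋. -/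

import Mathlib

/-!
Write `M = ρ₃ ⊗ ad σ` and `G = Γ ⊗ id`. From `Γ² = 1`, `Γ ρ₃ = ρ₃ Γ`, `ρ₃² = -1` and
`σ² = -1` one gets `G² = 1`, `M G = G M` and `M² = 2 (1 + S)`, where `S = id ⊗ (x ↦ σ x σ)`
is an involution. A kernel vector of `A_t` satisfies `M v = μ G v` with `μ = t / (√2 R) > 0`,
so `M² v = μ² v`; applying `S` gives `S v = v`, hence `μ² = 4` and `t = 2√2 R`. At that value
`ψ± = (v ± G v) / 2` are the required eigenvectors, and the kernel is nonzero: it contains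
`x ⊗ e` with `Γ x = x`, `ρ₃ x = -i x` and `[σ, e] = 2 i e`.
-/

open Matrix

/-- A *Clifford system*: real antisymmetric 8×8 matrices `γ₁,…,γ₄, ρ₁, ρ₂, ρ₃` and a
symmetric `Γ` obeying the algebraic relations (3.5) of the paper. -/
structure CliffordSystem where
  γ : Fin 4 → Matrix (Fin 8) (Fin 8) ℝ
  ρ : Fin 3 → Matrix (Fin 8) (Fin 8) ℝ
  Γ : Matrix (Fin 8) (Fin 8) ℝ
  γ_antisymm : ∀ α, (γ α)ᵀ = -(γ α)
  ρ_antisymm : ∀ j, (ρ j)ᵀ = -(ρ j)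
  Γ_symm : Γᵀ = Γ
  γγ : ∀ α β, γ α * γ β + γ β * γ α =
    if α = β then (-2 : ℝ) • (1 : Matrix (Fin 8) (Fin 8) ℝ) else 0
  ρρ : ∀ j k, ρ j * ρ k + ρ k * ρ j =
    if j = k then (-2 : ℝ) • (1 : Matrix (Fin 8) (Fin 8) ℝ) else 0
  ργ : ∀ j α, ρ j * γ α + γ α * ρ j = 0
  Γγ : ∀ α, Γ * γ α + γ α * Γ = 0
  Γρ : ∀ j, Γ * ρ j = ρ j * Γ
  Γsq : Γ * Γ = 1

/-- The `γ` matrices acting ℂ-linearly on `ℂ⁸`. -/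
noncomputable def CliffordSystem.γC (C : CliffordSystem) (α : Fin 4) :
    Matrix (Fin 8) (Fin 8) ℂ :=
  (C.γ α).map (fun r => (r : ℂ))

/-- The `ρ` matrices acting ℂ-linearly on `ℂ⁸`. -/
noncomputable def CliffordSystem.ρC (C : CliffordSystem) (j : Fin 3) :
    Matrix (Fin 8) (Fin 8) ℂ :=
  (C.ρ j).map (fun r => (r : ℂ))

/-- The matrix `Γ` acting ℂ-linearly on `ℂ⁸`. -/
noncomputable def CliffordSystem.ΓC (C : CliffordSystem) : Matrix (Fin 8) (Fin 8) ℂ :=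
  C.Γ.map (fun r => (r : ℂ))

/-- The action of `ρ₃ ⊗ ad σ` on `ℂ⁸ ⊗ sl(2,ℂ)`, realised on `sl(2,ℂ)`-valued 8-vectors. -/
noncomputable def rhoAd (C : CliffordSystem) (σ : Matrix (Fin 2) (Fin 2) ℂ)
    (v : Fin 8 → Matrix (Fin 2) (Fin 2) ℂ) : Fin 8 → Matrix (Fin 2) (Fin 2) ℂ :=
  fun i => ∑ j : Fin 8, C.ρC 2 i j • (σ * v j - v j * σ)

/-- The action of `Γ ⊗ id` on `ℂ⁸ ⊗ sl(2,ℂ)`, realised on `sl(2,ℂ)`-valued 8-vectors. -/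
noncomputable def gammaId (C : CliffordSystem)
    (v : Fin 8 → Matrix (Fin 2) (Fin 2) ℂ) : Fin 8 → Matrix (Fin 2) (Fin 2) ℂ :=
  fun i => ∑ j : Fin 8, C.ΓC i j • v j

/-- The operator `A_t = (1/√2) R (ρ₃ ⊗ ad σ) − (t/2)(Γ ⊗ id)` on `ℂ⁸ ⊗ sl(2,ℂ)`. -/
noncomputable def Aop (C : CliffordSystem) (σ : Matrix (Fin 2) (Fin 2) ℂ) (R t : ℝ)
    (v : Fin 8 → Matrix (Fin 2) (Fin 2) ℂ) : Fin 8 → Matrix (Fin 2) (Fin 2) ℂ :=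
  ((R / Real.sqrt 2 : ℝ) : ℂ) • rhoAd C σ v - ((t / 2 : ℝ) : ℂ) • gammaId C v

section MatrixTensor

variable {K n W : Type*} [CommRing K] [Fintype n] [DecidableEq n] [AddCommGroup W] [Module K W]

/-- `A ⊗ f` acting on `Kⁿ ⊗ W`, realised on `W`-valued `n`-vectors. -/
def matrixTensor : Matrix n n K →ₗ[K] Module.End K W →ₗ[K] Module.End K (n → W) :=
  LinearMap.mk₂ K
    (fun A f =>
      { toFun := fun v i => ∑ j, A i j • f (v j)
        map_add' := fun v w => by ext i; simp [smul_add, Finset.sum_add_distrib]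
        map_smul' := fun c v => by ext i; simp [Finset.smul_sum, smul_comm c] })
    (fun A B f => by ext v i; simp [add_smul, Finset.sum_add_distrib])
    (fun c A f => by ext v i; simp [mul_smul, Finset.smul_sum])
    (fun A f g => by ext v i; simp [smul_add, Finset.sum_add_distrib])
    (fun c A f => by ext v i; simp [Finset.smul_sum, smul_comm c])

@[simp]
lemma matrixTensor_apply (A : Matrix n n K) (f : Module.End K W) (v : n → W) (i : n) :
    matrixTensor A f v i = ∑ j, A i j • f (v j) :=
  rfl

lemma matrixTensor_mul_matrixTensor (A B : Matrix n n K) (f g : Module.End K W) :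
    matrixTensor A f * matrixTensor B g = matrixTensor (A * B) (f * g) := by
  refine LinearMap.ext fun v => funext fun i => ?_
  simp only [Module.End.mul_apply, matrixTensor_apply, map_sum, map_smul, Finset.smul_sum,
    smul_smul, mul_apply, Finset.sum_smul]
  exact Finset.sum_comm

lemma matrixTensor_one_one : matrixTensor (1 : Matrix n n K) (1 : Module.End K W) = 1 := by
  ext v i
  simp [one_apply, ite_smul]

lemma matrixTensor_apply_smul_const (A : Matrix n n K) (f : Module.End K W) (x : n → K) (w : W) :
    matrixTensor A f (fun i => x i • w) = fun i => (A *ᵥ x) i • f w := by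
  ext i
  simp [mulVec, dotProduct, Finset.sum_smul, smul_smul]

end MatrixTensor

section Commutator

variable (K : Type*) {A : Type*} [CommRing K] [Ring A] [Algebra K A]

def ad (a : A) : Module.End K A :=
  LinearMap.mulLeft K a - LinearMap.mulRight K a

variable {K}

lemma ad_apply (a x : A) : ad K a x = a * x - x * a :=
  rfl

lemma ad_mul_ad_of_mul_self_eq_neg_one {a : A} (ha : a * a = -1) :
    ad K a * ad K a = -((2 : K) • (1 + LinearMap.mulLeftRight K (a, a))) := by
  ext x
  have hl : a * (a * x) = -x := by rw [← mul_assoc, ha, neg_one_mul]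
  have hr : x * a * a = -x := by rw [mul_assoc, ha, mul_neg_one]
  simp only [Module.End.mul_apply, ad_apply, LinearMap.neg_apply, LinearMap.smul_apply,
    LinearMap.add_apply, Module.End.one_apply, LinearMap.mulLeftRight_apply, mul_sub, sub_mul, hl,
    hr]
  rw [two_smul, ← mul_assoc]
  abel

lemma mulLeftRight_mul_self_of_mul_self_eq_neg_one {a : A} (ha : a * a = -1) :
    LinearMap.mulLeftRight K (a, a) * LinearMap.mulLeftRight K (a, a) = 1 := by
  ext x
  simp only [Module.End.mul_apply, LinearMap.mulLeftRight_apply, Module.End.one_apply]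
  rw [show a * (a * x * a) * a = (a * a) * x * (a * a) by noncomm_ring, ha]
  simp

variable {n : Type*} [Fintype n] [DecidableEq n]

lemma matrixTensor_one_mulLeftRight_mul_self {a : A} (ha : a * a = -1) :
    matrixTensor (1 : Matrix n n K) (LinearMap.mulLeftRight K (a, a))
      * matrixTensor 1 (LinearMap.mulLeftRight K (a, a)) = 1 := by
  rw [matrixTensor_mul_matrixTensor, mul_one, mulLeftRight_mul_self_of_mul_self_eq_neg_one ha,
    matrixTensor_one_one]

end Commutator

section KernelAnalysis

variable {K V : Type*} [Field K] [AddCommGroup V] [Module K V] {M G S : Module.End K V}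

/-- Applying `S` to `M² v = 2 (v + S v) = μ² v` shows `S v = v`. -/
lemma sq_eq_four_of_apply_eq_smul_apply (hG : G * G = 1) (hMG : M * G = G * M)
    (hS : S * S = 1) (hM : M * M = (2 : K) • (1 + S)) {μ : K} (hμ : μ ≠ 0) {v : V}
    (hv0 : v ≠ 0) (hv : M v = μ • G v) : μ ^ 2 = 4 := by
  have hMM : (2 : K) • (v + S v) = μ ^ 2 • v := by
    calc (2 : K) • (v + S v) = (M * M) v := by simp [hM]
      _ = μ • (G * M) v := by rw [Module.End.mul_apply, hv, map_smul, ← Module.End.mul_apply, hMG]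
      _ = μ ^ 2 • v := by
        rw [Module.End.mul_apply, hv, map_smul, ← Module.End.mul_apply, hG, smul_smul, sq]
        rfl
  have hSv : S v = v := by
    have hS' : (2 : K) • (S v + v) = μ ^ 2 • S v := by
      rw [← map_smul, ← hMM, map_smul, map_add, ← Module.End.mul_apply, hS,
        Module.End.one_apply, add_comm]
    have : μ ^ 2 • S v = μ ^ 2 • v := by rw [← hS', ← hMM, add_comm]
    exact smul_right_injective V (pow_ne_zero 2 hμ) this
  rw [hSv, ← two_smul K v, smul_smul] at hMM
  norm_num at hMM
  exact (smul_left_injective K hv0 hMM).symm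

lemma apply_add_smul_apply_of_apply_eq_two_smul (hG : G * G = 1) (hMG : M * G = G * M) {v : V}
    (hv : M v = (2 : K) • G v) {ε : K} (hε : ε * ε = 1) :
    G (v + ε • G v) = ε • (v + ε • G v) ∧ M (v + ε • G v) = (2 * ε) • (v + ε • G v) := by
  have hGG : G (G v) = v := by rw [← Module.End.mul_apply, hG, Module.End.one_apply]
  have hMG' : M (G v) = (2 : K) • v := by
    rw [← Module.End.mul_apply, hMG, Module.End.mul_apply, hv, map_smul, hGG]
  constructor
  · rw [map_add, map_smul, hGG, smul_add, smul_smul, hε, one_smul, add_comm]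
  · rw [map_add, map_smul, hv, hMG', smul_add, smul_smul, smul_smul, mul_assoc, hε, mul_one,
      mul_comm ε 2, add_comm]

end KernelAnalysis

lemma eq_neg_one_of_add_self_eq_neg_two_smul {A : Type*} [Ring A] [Algebra ℝ A] {a : A}
    (h : a + a = (-2 : ℝ) • 1) : a = -1 := by
  rw [← two_smul ℝ, neg_smul, ← smul_neg] at h
  exact smul_right_injective _ two_ne_zero h

namespace CliffordSystem

variable (C : CliffordSystem)

lemma ρ_mul_self (j : Fin 3) : C.ρ j * C.ρ j = -1 :=
  eq_neg_one_of_add_self_eq_neg_two_smul (by simpa using C.ρρ j j)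

lemma γ_ne_zero (α : Fin 4) : C.γ α ≠ 0 := by
  intro h
  have : C.γ α * C.γ α = -1 := eq_neg_one_of_add_self_eq_neg_two_smul (by simpa using C.γγ α α)
  simp [h] at this

lemma one_add_Γ_ne_zero : 1 + C.Γ ≠ 0 := by
  intro h
  have hΓ : C.Γ = -1 := (neg_eq_of_add_eq_zero_right h).symm
  have h0 := C.Γγ 0
  rw [hΓ, neg_one_mul, mul_neg_one, ← neg_add, neg_eq_zero, ← two_smul ℝ] at h0
  exact C.γ_ne_zero 0 ((smul_eq_zero.mp h0).resolve_left two_ne_zero)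

lemma ρC_eq (j : Fin 3) : C.ρC j = Complex.ofRealHom.mapMatrix (C.ρ j) :=
  rfl

lemma ΓC_eq : C.ΓC = Complex.ofRealHom.mapMatrix C.Γ :=
  rfl

lemma ρC_mul_self (j : Fin 3) : C.ρC j * C.ρC j = -1 := by
  rw [ρC_eq, ← map_mul, ρ_mul_self, map_neg, map_one]

lemma ΓC_mul_self : C.ΓC * C.ΓC = 1 := by
  rw [ΓC_eq, ← map_mul, Γsq, map_one]

lemma ΓC_mul_ρC (j : Fin 3) : C.ΓC * C.ρC j = C.ρC j * C.ΓC := by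
  rw [ΓC_eq, ρC_eq, ← map_mul, Γρ, map_mul]

/-- The columns of `(1 + Γ) (1 + i ρ_j)` are common eigenvectors, and its real part is
`1 + Γ ≠ 0`. -/
lemma exists_ΓC_ρC_eigenvector (j : Fin 3) :
    ∃ x : Fin 8 → ℂ, x ≠ 0 ∧ C.ΓC *ᵥ x = x ∧ C.ρC j *ᵥ x = -Complex.I • x := by
  set N := (1 + C.ΓC) * (1 + Complex.I • C.ρC j)
  have hΓN : C.ΓC * N = N := by
    simp only [N, ← mul_assoc, mul_add, mul_one, ΓC_mul_self, add_comm]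
  have hρN : C.ρC j * N = -Complex.I • N := by
    have hρ : C.ρC j * (1 + Complex.I • C.ρC j) = -Complex.I • (1 + Complex.I • C.ρC j) := by
      rw [mul_add, mul_one, mul_smul_comm, ρC_mul_self, smul_add, smul_smul, neg_mul,
        Complex.I_mul_I, neg_neg, one_smul, smul_neg, add_comm, neg_smul]
    have hρΓ : C.ρC j * (1 + C.ΓC) = (1 + C.ΓC) * C.ρC j := by
      rw [mul_add, add_mul, ← ΓC_mul_ρC, mul_one, one_mul]
    rw [← mul_assoc, hρΓ, mul_assoc, hρ, mul_smul_comm]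
  have hN : N ≠ 0 := by
    have hN_eq : N = Complex.ofRealHom.mapMatrix (1 + C.Γ)
        + Complex.I • Complex.ofRealHom.mapMatrix ((1 + C.Γ) * C.ρ j) := by
      rw [map_mul, map_add, map_one, ← ΓC_eq, ← ρC_eq, ← mul_smul_comm]
      simp only [N, mul_add, mul_one]
    intro hN
    apply C.one_add_Γ_ne_zero
    ext a b
    have := congrArg Complex.re (congrFun (congrFun hN a) b)
    rw [hN_eq] at this
    generalize (1 + C.Γ) * C.ρ j = B at this
    simpa using this
  obtain ⟨k, hk⟩ : ∃ k, N.col k ≠ 0 := by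
    by_contra! h
    exact hN (Matrix.ext fun a b => congrFun (h b) a)
  refine ⟨N.col k, hk, ?_, ?_⟩
  · rw [← mulVec_single_one, mulVec_mulVec, hΓN]
  · rw [← mulVec_single_one, mulVec_mulVec, hρN, smul_mulVec]

section Operators

variable {W : Type*} [AddCommGroup W] [Module ℂ W]

lemma matrixTensor_ΓC_mul_self :
    matrixTensor C.ΓC (1 : Module.End ℂ W) * matrixTensor C.ΓC 1 = 1 := by
  rw [matrixTensor_mul_matrixTensor, C.ΓC_mul_self, mul_one, matrixTensor_one_one]

lemma matrixTensor_ρC_mul_ΓC_comm (j : Fin 3) (f : Module.End ℂ W) :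
    matrixTensor (C.ρC j) f * matrixTensor C.ΓC 1
      = matrixTensor C.ΓC 1 * matrixTensor (C.ρC j) f := by
  rw [matrixTensor_mul_matrixTensor, matrixTensor_mul_matrixTensor, ← C.ΓC_mul_ρC, mul_one,
    one_mul]

lemma matrixTensor_ρC_ad_mul_self (j : Fin 3) {A : Type*} [Ring A] [Algebra ℂ A] {a : A}
    (ha : a * a = -1) :
    matrixTensor (C.ρC j) (ad ℂ a) * matrixTensor (C.ρC j) (ad ℂ a)
      = (2 : ℂ) • (1 + matrixTensor 1 (LinearMap.mulLeftRight ℂ (a, a))) := by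
  rw [matrixTensor_mul_matrixTensor, C.ρC_mul_self, ad_mul_ad_of_mul_self_eq_neg_one ha,
    map_neg, map_neg matrixTensor, LinearMap.neg_apply, neg_neg, map_smul, map_add,
    matrixTensor_one_one]

end Operators

end CliffordSystem

section ComplexMatrix

open Complex

lemma Matrix.mul_self_eq_neg_one_of_trace_eq_zero {σ : Matrix (Fin 2) (Fin 2) ℂ}
    (hσt : σ.trace = 0) (hσσ : -(1 / 2 : ℂ) * (σ * σ).trace = 1) : σ * σ = -1 := by
  obtain ⟨a, b, c, d, rfl⟩ : ∃ a b c d, σ = !![a, b; c, d] := ⟨_, _, _, _, eta_fin_two σ⟩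
  rw [trace_fin_two_of] at hσt
  rw [mul_fin_two, trace_fin_two_of] at hσσ
  obtain rfl : d = -a := by linear_combination hσt
  have hdet : a * a + b * c = -1 := by linear_combination -hσσ
  rw [mul_fin_two, ← Matrix.ext_iff]
  intro i j
  fin_cases i <;> fin_cases j <;> simp <;> first | ring1 | linear_combination hdet

lemma Matrix.add_smul_one_ne_zero_of_trace_eq_zero {σ : Matrix (Fin 2) (Fin 2) ℂ}
    (hσt : σ.trace = 0) {c : ℂ} (hc : c ≠ 0) : σ + c • 1 ≠ 0 := by
  intro h
  have := congrArg trace h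
  rw [trace_add, hσt, trace_smul, trace_one] at this
  simp [hc] at this

/-- `e = (σ + i) E_{bc} (σ - i)`: `σ` acts on it by `i` from the left and by `-i` from the
right, and `(σ - i) (σ + i) = σ² + 1 = 0` makes it traceless. -/
lemma Matrix.exists_ad_eigenvector {m : Type*} [Fintype m] [DecidableEq m]
    {σ : Matrix m m ℂ} (hσ : σ * σ = -1) (hP : σ + I • 1 ≠ 0) (hQ : σ + (-I) • 1 ≠ 0) :
    ∃ e : Matrix m m ℂ, e ≠ 0 ∧ e.trace = 0 ∧ ad ℂ σ e = (2 * I) • e := by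
  set P := σ + I • 1
  set Q := σ + (-I) • 1
  obtain ⟨a, b, hab⟩ : ∃ a b, P a b ≠ 0 := by
    by_contra! h
    exact hP (Matrix.ext h)
  obtain ⟨c, d, hcd⟩ : ∃ c d, Q c d ≠ 0 := by
    by_contra! h
    exact hQ (Matrix.ext h)
  have hσP : σ * P = I • P := by
    simp only [P, mul_add, mul_smul_comm, mul_one, hσ, smul_add, smul_smul, I_mul_I, neg_one_smul]
    abel
  have hQσ : Q * σ = -I • Q := by
    simp only [Q, add_mul, smul_mul_assoc, one_mul, hσ, smul_add, smul_smul, neg_mul_neg, I_mul_I,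
      neg_one_smul]
    abel
  have hQP : Q * P = 0 := by
    simp only [P, Q, add_mul, mul_add, smul_mul_assoc, mul_smul_comm, one_mul, mul_one, hσ]
    linear_combination (norm := module) -(I_mul_I • (1 : Matrix m m ℂ))
  refine ⟨P * single b c 1 * Q, fun he => ?_, ?_, ?_⟩
  · have := congrFun (congrFun he a) d
    simp only [mul_apply, single_apply, ite_and, mul_ite, mul_one, mul_zero, Finset.sum_ite_eq,
      Finset.mem_univ, if_true, ite_mul, zero_mul, zero_apply] at this
    exact mul_ne_zero hab hcd this
  · rw [trace_mul_cycle, hQP, zero_mul, trace_zero]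
  · rw [ad_apply, ← mul_assoc, ← mul_assoc, hσP, mul_assoc _ _ σ, hQσ, smul_mul_assoc,
      smul_mul_assoc, mul_smul_comm]
    module

end ComplexMatrix

lemma div_sqrt_two_mul_eq_two_iff {R t : ℝ} (hR : 0 < R) :
    t / (√2 * R) = 2 ↔ t = 2 * √2 * R := by
  rw [div_eq_iff (by positivity), mul_assoc]

section Aop

variable (C : CliffordSystem) (σ : Matrix (Fin 2) (Fin 2) ℂ)

lemma rhoAd_eq_matrixTensor : rhoAd C σ = matrixTensor (C.ρC 2) (ad ℂ σ) :=
  rfl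

lemma gammaId_eq_matrixTensor : gammaId C = matrixTensor C.ΓC 1 :=
  rfl

variable {σ}

lemma Aop_eq_zero_iff {R : ℝ} (hR : R ≠ 0) (t : ℝ) (v : Fin 8 → Matrix (Fin 2) (Fin 2) ℂ) :
    Aop C σ R t v = 0 ↔ rhoAd C σ v = ((t / (√2 * R) : ℝ) : ℂ) • gammaId C v := by
  have hc : ((R / √2 : ℝ) : ℂ) ≠ 0 := by simp [hR]
  have hμ : ((R / √2 : ℝ) : ℂ)⁻¹ * ((t / 2 : ℝ) : ℂ) = ((t / (√2 * R) : ℝ) : ℂ) := by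
    rw [← Complex.ofReal_inv, ← Complex.ofReal_mul]
    congr 1
    field_simp
    rw [Real.sq_sqrt zero_le_two, mul_comm]
  rw [Aop, sub_eq_zero, ← eq_inv_smul_iff₀ hc, smul_smul, hμ]

lemma exists_traceless_common_eigenvector (hσt : σ.trace = 0) (hσ : σ * σ = -1) :
    ∃ v : Fin 8 → Matrix (Fin 2) (Fin 2) ℂ, (∀ i, (v i).trace = 0) ∧ v ≠ 0 ∧
      rhoAd C σ v = (2 : ℂ) • v ∧ gammaId C v = v := by
  obtain ⟨e, he0, he_trace, he⟩ := exists_ad_eigenvector hσ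
    (add_smul_one_ne_zero_of_trace_eq_zero hσt Complex.I_ne_zero)
    (add_smul_one_ne_zero_of_trace_eq_zero hσt (neg_ne_zero.mpr Complex.I_ne_zero))
  obtain ⟨x, hx0, hΓx, hρx⟩ := C.exists_ΓC_ρC_eigenvector 2
  obtain ⟨i, hi⟩ := Function.ne_iff.mp hx0
  refine ⟨fun i => x i • e, fun i => by rw [trace_smul, he_trace, smul_zero],
    fun h => smul_ne_zero hi he0 (congrFun h i), ?_, ?_⟩
  · rw [rhoAd_eq_matrixTensor, matrixTensor_apply_smul_const, hρx, he]
    ext1 j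
    simp only [Pi.smul_apply, smul_smul, smul_eq_mul]
    congr 1
    linear_combination (-2 * x j) * Complex.I_mul_I
  · rw [gammaId_eq_matrixTensor, matrixTensor_apply_smul_const, hΓx]
    rfl

lemma eq_two_sqrt_two_mul_of_Aop_eq_zero (hσ : σ * σ = -1) {R t : ℝ} (hR : 0 < R) (ht : 0 < t)
    {v : Fin 8 → Matrix (Fin 2) (Fin 2) ℂ} (hv0 : v ≠ 0) (hv : Aop C σ R t v = 0) :
    t = 2 * √2 * R := by
  rw [Aop_eq_zero_iff C hR.ne', rhoAd_eq_matrixTensor, gammaId_eq_matrixTensor] at hv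
  have hμ := sq_eq_four_of_apply_eq_smul_apply C.matrixTensor_ΓC_mul_self
    (C.matrixTensor_ρC_mul_ΓC_comm 2 _) (matrixTensor_one_mulLeftRight_mul_self hσ)
    (C.matrixTensor_ρC_ad_mul_self 2 hσ) (by exact_mod_cast (by positivity : t / (√2 * R) ≠ 0))
    hv0 hv
  have : (t / (√2 * R)) ^ 2 = 2 ^ 2 := by
    exact_mod_cast hμ.trans (by norm_num : (4 : ℂ) = 2 ^ 2)
  rw [← div_sqrt_two_mul_eq_two_iff hR]
  exact (pow_left_inj₀ (by positivity) zero_le_two two_ne_zero).mp this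

lemma Aop_two_sqrt_two_mul_eq_zero_iff {R : ℝ} (hR : 0 < R)
    (v : Fin 8 → Matrix (Fin 2) (Fin 2) ℂ) :
    Aop C σ R (2 * √2 * R) v = 0 ↔ rhoAd C σ v = (2 : ℂ) • gammaId C v := by
  rw [Aop_eq_zero_iff C hR.ne', (div_sqrt_two_mul_eq_two_iff hR).mpr rfl, Complex.ofReal_ofNat]

lemma exists_eigen_split_of_rhoAd_eq_two_smul_gammaId {v : Fin 8 → Matrix (Fin 2) (Fin 2) ℂ}
    (htr : ∀ i, (v i).trace = 0) (hv : rhoAd C σ v = (2 : ℂ) • gammaId C v) :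
    ∃ ψp ψm : Fin 8 → Matrix (Fin 2) (Fin 2) ℂ,
      v = ψp + ψm ∧
      (∀ i, (ψp i).trace = 0) ∧ (∀ i, (ψm i).trace = 0) ∧
      gammaId C ψp = ψp ∧ rhoAd C σ ψp = (2 : ℂ) • ψp ∧
      gammaId C ψm = -ψm ∧ rhoAd C σ ψm = (-2 : ℂ) • ψm := by
  rw [rhoAd_eq_matrixTensor, gammaId_eq_matrixTensor] at hv ⊢
  have hG := C.matrixTensor_ΓC_mul_self (W := Matrix (Fin 2) (Fin 2) ℂ)
  have hMG := C.matrixTensor_ρC_mul_ΓC_comm 2 (ad ℂ σ)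
  obtain ⟨hpG, hpM⟩ := apply_add_smul_apply_of_apply_eq_two_smul hG hMG hv (one_mul 1)
  obtain ⟨hmG, hmM⟩ := apply_add_smul_apply_of_apply_eq_two_smul hG hMG hv
    (ε := -1) (by norm_num)
  refine ⟨(2⁻¹ : ℂ) • (v + (1 : ℂ) • matrixTensor C.ΓC 1 v),
    (2⁻¹ : ℂ) • (v + (-1 : ℂ) • matrixTensor C.ΓC 1 v),
    by module, fun i => by simp [htr], fun i => by simp [htr], ?_, ?_, ?_, ?_⟩
  · rw [map_smul, hpG, one_smul]
  · rw [map_smul, hpM, smul_comm, mul_one]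
  · rw [map_smul, hmG, smul_comm, neg_one_smul]
  · rw [map_smul, hmM, smul_comm, mul_neg_one]

end Aop

theorem Aop_kernel_general (C : CliffordSystem) (σ : Matrix (Fin 2) (Fin 2) ℂ)
    (hσt : σ.trace = 0)
    (hσσ : -(1 / 2 : ℂ) * (σ * σ).trace = 1)
    (R : ℝ) (hR : 0 < R) :
    (∀ t : ℝ, 0 < t →
      ((∃ v : Fin 8 → Matrix (Fin 2) (Fin 2) ℂ,
          (∀ i, (v i).trace = 0) ∧ v ≠ 0 ∧ Aop C σ R t v = 0)
        ↔ t = 2 * Real.sqrt 2 * R)) ∧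
    (∀ v : Fin 8 → Matrix (Fin 2) (Fin 2) ℂ, (∀ i, (v i).trace = 0) →
      Aop C σ R (2 * Real.sqrt 2 * R) v = 0 →
      ∃ ψp ψm : Fin 8 → Matrix (Fin 2) (Fin 2) ℂ,
        v = ψp + ψm ∧
        (∀ i, (ψp i).trace = 0) ∧ (∀ i, (ψm i).trace = 0) ∧
        gammaId C ψp = ψp ∧ rhoAd C σ ψp = (2 : ℂ) • ψp ∧
        gammaId C ψm = -ψm ∧ rhoAd C σ ψm = (-2 : ℂ) • ψm) := by
  have hσ := mul_self_eq_neg_one_of_trace_eq_zero hσt hσσ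
  refine ⟨fun t ht => ⟨fun ⟨v, _, hv0, hv⟩ => eq_two_sqrt_two_mul_of_Aop_eq_zero C hσ hR ht hv0 hv,
    ?_⟩, fun v htr hv => ?_⟩
  · rintro rfl
    obtain ⟨v, htr, hv0, hρ, hΓ⟩ := exists_traceless_common_eigenvector C hσt hσ
    exact ⟨v, htr, hv0, (Aop_two_sqrt_two_mul_eq_zero_iff C hR v).mpr (by rw [hρ, hΓ])⟩
  · exact exists_eigen_split_of_rhoAd_eq_two_smul_gammaId C htr
      ((Aop_two_sqrt_two_mul_eq_zero_iff C hR v).mp hv)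

/-- the kernel analysis of (3.15)–(3.17) and (3.32).  For a unit
`σ ∈ su(2)` and `R > 0`: for `t > 0` the operator `A_t` on `ℂ⁸ ⊗ sl(2,ℂ)` has nontrivial
kernel iff `t = 2√2 R`; and at `t = 2√2 R` every kernel element splits as `ψ₊ + ψ₋` with
`(Γ⊗id)ψ₊ = ψ₊`, `(ρ₃⊗adσ)ψ₊ = 2ψ₊`, `(Γ⊗id)ψ₋ = −ψ₋`, `(ρ₃⊗adσ)ψ₋ = −2ψ₋`. -/
theorem Aop_kernel (C : CliffordSystem) (σ : Matrix (Fin 2) (Fin 2) ℂ)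
    (hσa : σᴴ = -σ) (hσt : σ.trace = 0)
    (hσσ : -(1 / 2 : ℂ) * (σ * σ).trace = 1)
    (R : ℝ) (hR : 0 < R) :
    (∀ t : ℝ, 0 < t →
      ((∃ v : Fin 8 → Matrix (Fin 2) (Fin 2) ℂ,
          (∀ i, (v i).trace = 0) ∧ v ≠ 0 ∧ Aop C σ R t v = 0)
        ↔ t = 2 * Real.sqrt 2 * R)) ∧
    (∀ v : Fin 8 → Matrix (Fin 2) (Fin 2) ℂ, (∀ i, (v i).trace = 0) →
      Aop C σ R (2 * Real.sqrt 2 * R) v = 0 →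
      ∃ ψp ψm : Fin 8 → Matrix (Fin 2) (Fin 2) ℂ,
        v = ψp + ψm ∧
        (∀ i, (ψp i).trace = 0) ∧ (∀ i, (ψm i).trace = 0) ∧
        gammaId C ψp = ψp ∧ rhoAd C σ ψp = (2 : ℂ) • ψp ∧
        gammaId C ψm = -ψm ∧ rhoAd C σ ψm = (-2 : ℂ) • ψm) :=
  Aop_kernel_general C σ hσt hσσ R hR
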